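/- The quantum W1 distance is additive with respect to the tensor product: for any quantum states ρ', σ' ∈ S_m and ρ'', σ'' ∈ S_n, one has ‖ρ' ⊗ ρ'' − σ' ⊗ σ''‖_{W1} = ‖ρ' − σ'‖_{W1} + ‖ρ'' − σ''‖_{W1}. -/

import Mathlib

open scoped BigOperators
open scoped Classical
open scoped ComplexOrder

noncomputable section

namespace QW1

/-- Configurations of `n` qudits of local dimension `d`:
the index set of the canonical basis of `(ℂ^d)^{⊗ n}`. -/
abbrev Cfg (d n : ℕ) : Type := Fin n → Fin d

/-- Linear operators on the Hilbert space of `n` qudits, represented as matrices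
in the canonical basis. -/
abbrev Mat (d n : ℕ) : Type := Matrix (Cfg d n) (Cfg d n) ℂ

/-- The trace norm `‖A‖₁ = Tr √(Aᴴ A)`. -/
noncomputable def traceNorm {ι : Type} [Fintype ι] [DecidableEq ι] (A : Matrix ι ι ℂ) : ℝ :=
  (((Matrix.posSemidef_conjTranspose_mul_self A).1.eigenvectorUnitary : Matrix ι ι ℂ) *
      Matrix.diagonal (fun i => ((Real.sqrt ((Matrix.posSemidef_conjTranspose_mul_self A).1.eigenvalues i) : ℝ) : ℂ)) *
      (star (Matrix.posSemidef_conjTranspose_mul_self A).1.eigenvectorUnitary : Matrix ι ι ℂ)).trace.re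

/-- The operator norm `‖A‖_∞`. -/
noncomputable def opNorm {ι : Type} [Fintype ι] [DecidableEq ι] (A : Matrix ι ι ℂ) : ℝ :=
  ‖Matrix.toEuclideanCLM (𝕜 := ℂ) A‖

/-- Quantum states: positive semidefinite operators with unit trace. -/
def IsState {ι : Type} [Fintype ι] (ρ : Matrix ι ι ℂ) : Prop :=
  ρ.PosSemidef ∧ ρ.trace = 1

/-- Insert the value `s` at position `i` into a configuration `a` of the remaining qudits. -/
def ins {d n : ℕ} (i : Fin n) (a : {j : Fin n // j ≠ i} → Fin d) (s : Fin d) : Cfg d n :=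
  fun j => if h : j = i then s else a ⟨j, h⟩

/-- The partial trace over the `i`-th qudit. -/
noncomputable def ptrace {d n : ℕ} (i : Fin n) (X : Mat d n) :
    Matrix ({j : Fin n // j ≠ i} → Fin d) ({j : Fin n // j ≠ i} → Fin d) ℂ :=
  fun a b => ∑ s : Fin d, X (ins i a s) (ins i b s)

/-- The marginal of `ρ` on the `i`-th qudit (partial trace over all the other qudits). -/
noncomputable def marginal {d n : ℕ} (i : Fin n) (ρ : Mat d n) :
    Matrix (Fin d) (Fin d) ℂ :=
  fun s t => ∑ a : ({j : Fin n // j ≠ i} → Fin d), ρ (ins i a s) (ins i a t)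

/-- Combine a configuration `s` of the qudits in `I` with a configuration `a` of the rest. -/
def insSet {d n : ℕ} (I : Finset (Fin n)) (a : {j : Fin n // j ∉ I} → Fin d)
    (s : {j : Fin n // j ∈ I} → Fin d) : Cfg d n :=
  fun j => if h : j ∈ I then s ⟨j, h⟩ else a ⟨j, h⟩

/-- The partial trace over the qudits in `I`. -/
noncomputable def ptraceSet {d n : ℕ} (I : Finset (Fin n)) (X : Mat d n) :
    Matrix ({j : Fin n // j ∉ I} → Fin d) ({j : Fin n // j ∉ I} → Fin d) ℂ :=
  fun a b => ∑ s : ({j : Fin n // j ∈ I} → Fin d), X (insSet I a s) (insSet I b s)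

/-- The set of values `(1/2) ∑ i ‖X⁽ⁱ⁾‖₁` over all decompositions `X = ∑ i X⁽ⁱ⁾` with
`X⁽ⁱ⁾` self-adjoint and `Tr_i X⁽ⁱ⁾ = 0`. -/
def W1Set {d n : ℕ} (X : Mat d n) : Set ℝ :=
  { r | ∃ Y : Fin n → Mat d n, (∀ i, (Y i).IsHermitian) ∧ (∀ i, ptrace i (Y i) = 0) ∧
      X = ∑ i, Y i ∧ r = (1 / 2) * ∑ i, traceNorm (Y i) }

/-- The quantum `W₁` norm. -/
noncomputable def W1 {d n : ℕ} (X : Mat d n) : ℝ := sInf (W1Set X)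

/-- The quantum Lipschitz constant: the dual norm of the quantum `W₁` norm. -/
noncomputable def lipschitz {d n : ℕ} (H : Mat d n) : ℝ :=
  sSup { r | ∃ X : Mat d n, X.IsHermitian ∧ X.trace = 0 ∧ W1 X ≤ 1 ∧
    r = ((H * X).trace).re }

/-- Extension `Φ ⊗ id_R` of a map on matrices. -/
def extendMap {A B R : Type} [Fintype A] [Fintype B] [Fintype R]
    (Φ : Matrix A A ℂ → Matrix B B ℂ) (M : Matrix (A × R) (A × R) ℂ) :
    Matrix (B × R) (B × R) ℂ :=
  fun p q => Φ (fun a a' => M (a, p.2) (a', q.2)) p.1 q.1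

/-- Quantum channels: completely positive trace-preserving linear maps. -/
def IsCPTP {A B : Type} [Fintype A] [Fintype B]
    (Φ : Matrix A A ℂ →ₗ[ℂ] Matrix B B ℂ) : Prop :=
  (∀ (k : ℕ) (M : Matrix (A × Fin k) (A × Fin k) ℂ), M.PosSemidef →
    (extendMap (fun N => Φ N) M).PosSemidef) ∧
  ∀ M, (Φ M).trace = M.trace

/-- Action `φ_i ⊗ id` of a single-qudit map `φ` on the `i`-th qudit of `n` qudits. -/
def applyAt {d n : ℕ} (i : Fin n) (φ : Matrix (Fin d) (Fin d) ℂ → Matrix (Fin d) (Fin d) ℂ)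
    (X : Mat d n) : Mat d n :=
  fun a b => φ (fun s t => X (Function.update a i s) (Function.update b i t)) (a i) (b i)

/-- Action `φ_I ⊗ id` of a map `φ` on the qudits in `I`. -/
def applyOn {d n : ℕ} (I : Finset (Fin n))
    (φ : Matrix ({j : Fin n // j ∈ I} → Fin d) ({j : Fin n // j ∈ I} → Fin d) ℂ →
         Matrix ({j : Fin n // j ∈ I} → Fin d) ({j : Fin n // j ∈ I} → Fin d) ℂ)
    (X : Mat d n) : Mat d n :=
  fun a b =>
    φ (fun s t => X (insSet I (fun j => a j) s) (insSet I (fun j => b j) t))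
      (fun j => a j) (fun j => b j)

/-- The operator obtained from `X` by permuting the tensor factors according to `π`. -/
def permuteMat {d n : ℕ} (π : Equiv.Perm (Fin n)) (X : Mat d n) : Mat d n :=
  fun a b => X (a ∘ π) (b ∘ π)

/-- Tensor product of an operator on the first `m` qudits with one on the last `n` qudits. -/
def tensorMN {d m n : ℕ} (A : Mat d m) (B : Mat d n) : Mat d (m + n) :=
  fun a b =>
    A (fun i => a (Fin.castAdd n i)) (fun i => b (Fin.castAdd n i)) *
    B (fun j => a (Fin.natAdd m j)) (fun j => b (Fin.natAdd m j))

/-- Partial trace of an operator on `m + n` qudits over the last `n` qudits. -/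
noncomputable def ptraceLast {d m n : ℕ} (X : Mat d (m + n)) : Mat d m :=
  fun a b => ∑ k : Cfg d n, X (Fin.append a k) (Fin.append b k)

/-- Partial trace of an operator on `m + n` qudits over the first `m` qudits. -/
noncomputable def ptraceFirst {d m n : ℕ} (X : Mat d (m + n)) : Mat d n :=
  fun a b => ∑ k : Cfg d m, X (Fin.append k a) (Fin.append k b)

/-- `n`-fold tensor product `σ₁ ⊗ ⋯ ⊗ σₙ` of single-qudit operators. -/
def tensorAll {d n : ℕ} (σs : Fin n → Matrix (Fin d) (Fin d) ℂ) : Mat d n :=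
  fun a b => ∏ i, σs i (a i) (b i)

/-- `I_d^{(i)} ⊗ K`: the identity on the `i`-th qudit tensored with an operator `K`
on the remaining qudits. -/
def idTensorAt {d n : ℕ} (i : Fin n)
    (K : Matrix ({j : Fin n // j ≠ i} → Fin d) ({j : Fin n // j ≠ i} → Fin d) ℂ) :
    Mat d n :=
  fun a b => if a i = b i then K (fun j => a j) (fun j => b j) else 0

/-- `K ⊗ identity`: an operator acting only on the qudits in `I`. -/
def embedOn {d n : ℕ} (I : Finset (Fin n))
    (K : Matrix ({j : Fin n // j ∈ I} → Fin d) ({j : Fin n // j ∈ I} → Fin d) ℂ) :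
    Mat d n :=
  fun a b => if (∀ j, j ∉ I → a j = b j) then K (fun j => a j) (fun j => b j) else 0

/-- The `n`-th tensor power `φ^{⊗n}` of a single-qudit linear map `φ`. -/
noncomputable def tensorPowMap {d n : ℕ}
    (φ : Matrix (Fin d) (Fin d) ℂ → Matrix (Fin d) (Fin d) ℂ) (X : Mat d n) : Mat d n :=
  fun a b => ∑ s : Cfg d n, ∑ t : Cfg d n,
    X s t * ∏ j, φ (Matrix.single (s j) (t j) 1) (a j) (b j)

/-- The `1 → 1` norm of a map on single-qudit operators. -/
noncomputable def norm1to1 {d : ℕ}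
    (F : Matrix (Fin d) (Fin d) ℂ → Matrix (Fin d) (Fin d) ℂ) : ℝ :=
  sSup { r | ∃ ρ : Matrix (Fin d) (Fin d) ℂ, IsState ρ ∧ r = traceNorm (F ρ) }

/-- The diamond norm of a map on single-qudit operators. -/
noncomputable def diamondNorm {d : ℕ}
    (F : Matrix (Fin d) (Fin d) ℂ → Matrix (Fin d) (Fin d) ℂ) : ℝ :=
  sSup { r | ∃ ρ : Matrix (Fin d × Fin d) (Fin d × Fin d) ℂ, IsState ρ ∧
    r = traceNorm (extendMap F ρ) }

/-- The contraction coefficient (`W₁ → W₁` norm) of a map on `n`-qudit operators. -/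
noncomputable def W1toW1 {d n : ℕ} (Φ : Mat d n → Mat d n) : ℝ :=
  sSup { r | ∃ X : Mat d n, X.IsHermitian ∧ X.trace = 0 ∧ W1 X ≤ 1 ∧ r = W1 (Φ X) }

/-- The von Neumann entropy `S(ρ) = -Tr[ρ ln ρ]` (natural logarithm). -/
noncomputable def vnEntropy {ι : Type} [Fintype ι] [DecidableEq ι] (ρ : Matrix ι ι ℂ) : ℝ :=
  if h : ρ.IsHermitian then -∑ i, h.eigenvalues i * Real.log (h.eigenvalues i) else 0

/-- The logarithm of a self-adjoint matrix, via the spectral decomposition. -/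
noncomputable def matLog {ι : Type} [Fintype ι] [DecidableEq ι] (ρ : Matrix ι ι ℂ) :
    Matrix ι ι ℂ :=
  if h : ρ.IsHermitian then
    (h.eigenvectorUnitary : Matrix ι ι ℂ) *
      Matrix.diagonal (fun i => (Real.log (h.eigenvalues i) : ℂ)) *
      (star (h.eigenvectorUnitary : Matrix ι ι ℂ))
  else 0

/-- The quantum relative entropy `S(ρ‖σ) = Tr[ρ (ln ρ - ln σ)]`. -/
noncomputable def relEntropy {ι : Type} [Fintype ι] [DecidableEq ι]
    (ρ σ : Matrix ι ι ℂ) : ℝ :=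
  ((ρ * (matLog ρ - matLog σ)).trace).re

/-- The Hamming distance between two configurations. -/
def hamming {d n : ℕ} (x y : Cfg d n) : ℕ :=
  (Finset.univ.filter (fun i => x i ≠ y i)).card

/-- Probability distributions on a finite set. -/
def IsProb {α : Type} [Fintype α] (p : α → ℝ) : Prop :=
  (∀ x, 0 ≤ p x) ∧ ∑ x, p x = 1

/-- Couplings of two probability distributions. -/
def IsCoupling {α : Type} [Fintype α] (π : α × α → ℝ) (p q : α → ℝ) : Prop :=
  IsProb π ∧ (∀ x, ∑ y, π (x, y) = p x) ∧ (∀ y, ∑ x, π (x, y) = q y)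

/-- The classical Wasserstein distance of order 1 with respect to the Hamming distance. -/
noncomputable def classicalW1 {d n : ℕ} (p q : Cfg d n → ℝ) : ℝ :=
  sInf { c | ∃ π : Cfg d n × Cfg d n → ℝ, IsCoupling π p q ∧
    c = ∑ x : Cfg d n, ∑ y : Cfg d n, (hamming x y : ℝ) * π (x, y) }

/-- The Lipschitz constant of a function on `[d]^n` with respect to the Hamming distance. -/
noncomputable def classicalLip {d n : ℕ} (f : Cfg d n → ℝ) : ℝ :=
  sSup { r | ∃ x y : Cfg d n, x ≠ y ∧ r = |f x - f y| / (hamming x y : ℝ) }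


/-! Write `Δ' = ρ' - σ'` and `Δ'' = ρ'' - σ''`. Since
`ρ' ⊗ ρ'' - σ' ⊗ σ'' = Δ' ⊗ ρ'' + σ' ⊗ Δ''`, decompositions `Δ' = ∑ X⁽ⁱ⁾` and `Δ'' = ∑ Y⁽ʲ⁾` give
the decomposition `{X⁽ⁱ⁾ ⊗ ρ''} ∪ {σ' ⊗ Y⁽ʲ⁾}` of the product, so `W₁` is subadditive. Conversely,
tracing out the last `n` qudits of a decomposition `∑ₗ Z⁽ˡ⁾` of `ρ' ⊗ ρ'' - σ' ⊗ σ''` kills the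
terms with `l` among those qudits and leaves a decomposition of `Δ'`; tracing out the first `m`
qudits leaves one of `Δ''`. Tensoring with a state and partial traces are positive and trace
preserving, hence (via the Jordan decomposition) do not increase the trace norm of Hermitian
operators, so both constructions control the costs.

Since `sInf ∅ = 0`, we also need that every traceless Hermitian operator has some decomposition:
put each off-diagonal entry into the term of the first qudit where row and column index differ,
and telescope the diagonal along paths that change one qudit at a time. -/

open scoped MatrixOrder Kronecker
open Function

section TraceNorm

variable {ι κ : Type} [Fintype ι] [DecidableEq ι] [Fintype κ] [DecidableEq κ]

lemma traceNorm_eq_re_trace_abs (A : Matrix ι ι ℂ) : traceNorm A = (CFC.abs A).trace.re := by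
  have hA := Matrix.posSemidef_conjTranspose_mul_self A
  rw [CFC.abs, CFC.sqrt_eq_real_sqrt _ (by simpa [Matrix.star_eq_conjTranspose] using hA.nonneg),
    cfcₙ_eq_cfc, Matrix.star_eq_conjTranspose, hA.1.cfc_eq, Matrix.IsHermitian.cfc,
    Unitary.conjStarAlgAut_apply]
  rfl

lemma trace_cfc {A : Matrix ι ι ℂ} (hA : A.IsHermitian) (f : ℝ → ℝ) :
    (cfc f A).trace = ∑ i, (f (hA.eigenvalues i) : ℂ) := by
  rw [hA.cfc_eq, Matrix.IsHermitian.cfc, Unitary.conjStarAlgAut_apply, Matrix.trace_mul_cycle,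
    Unitary.coe_star_mul_self, one_mul, Matrix.trace_diagonal]
  rfl

lemma traceNorm_eq_sum_abs_eigenvalues {A : Matrix ι ι ℂ} (hA : A.IsHermitian) :
    traceNorm A = ∑ i, |hA.eigenvalues i| := by
  rw [traceNorm_eq_re_trace_abs, CFC.abs_eq_cfcₙ_norm A hA.isSelfAdjoint, cfcₙ_eq_cfc,
    trace_cfc hA, Complex.re_sum]
  simp

lemma traceNorm_nonneg (A : Matrix ι ι ℂ) : 0 ≤ traceNorm A := by
  rw [traceNorm_eq_re_trace_abs]
  simpa using
    (Complex.le_def.mp (Matrix.nonneg_iff_posSemidef.mp (CFC.abs_nonneg A)).trace_nonneg).1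

lemma traceNorm_le_re_trace_add_re_trace {A B C : Matrix ι ι ℂ} (hA : A.IsHermitian)
    (hB : B.PosSemidef) (hC : C.PosSemidef) (h : A = B - C) :
    traceNorm A ≤ B.trace.re + C.trace.re := by
  have hdiag := hA.conjStarAlgAut_star_eigenvectorUnitary
  rw [Unitary.conjStarAlgAut_star_apply] at hdiag
  set U : Matrix ι ι ℂ := (hA.eigenvectorUnitary : Matrix ι ι ℂ)
  have hconj : ∀ M : Matrix ι ι ℂ, (star U * M * U).trace = M.trace := fun M => by
    rw [Matrix.trace_mul_cycle, Matrix.mem_unitaryGroup_iff.mp hA.eigenvectorUnitary.2, one_mul]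
  have hB' : (star U * B * U).PosSemidef := by
    simpa [Matrix.star_eq_conjTranspose] using hB.conjTranspose_mul_mul_same U
  have hC' : (star U * C * U).PosSemidef := by
    simpa [Matrix.star_eq_conjTranspose] using hC.conjTranspose_mul_mul_same U
  have hsplit : star U * A * U = star U * B * U - star U * C * U := by
    rw [h, Matrix.mul_sub, Matrix.sub_mul]
  -- in the eigenbasis of `A`, each eigenvalue is a difference of two nonnegative diagonal entries
  have heig : ∀ i, hA.eigenvalues i = ((star U * B * U) i i).re - ((star U * C * U) i i).re := by
    intro i
    simpa using congrArg Complex.re (congrFun (congrFun (hsplit.symm.trans hdiag) i) i).symm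
  calc traceNorm A = ∑ i, |hA.eigenvalues i| := traceNorm_eq_sum_abs_eigenvalues hA
    _ ≤ ∑ i, (((star U * B * U) i i).re + ((star U * C * U) i i).re) := by
      refine Finset.sum_le_sum fun i _ => ?_
      have hb := (Complex.le_def.mp (hB'.diag_nonneg (i := i))).1
      have hc := (Complex.le_def.mp (hC'.diag_nonneg (i := i))).1
      rw [Complex.zero_re] at hb hc
      rw [heig]
      exact abs_le.mpr ⟨by linarith, by linarith⟩
    _ = B.trace.re + C.trace.re := by
      rw [← hconj B, ← hconj C, Finset.sum_add_distrib, Matrix.trace, Matrix.trace,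
        Complex.re_sum, Complex.re_sum]
      rfl

lemma traceNorm_map_le (f : Matrix ι ι ℂ →+ Matrix κ κ ℂ)
    (hpos : ∀ X, X.PosSemidef → (f X).PosSemidef) (htr : ∀ X, (f X).trace = X.trace)
    {A : Matrix ι ι ℂ} (hA : A.IsHermitian) : traceNorm (f A) ≤ traceNorm A := by
  have hP : (A⁺).PosSemidef := Matrix.nonneg_iff_posSemidef.mp (CFC.posPart_nonneg A)
  have hN : (A⁻).PosSemidef := Matrix.nonneg_iff_posSemidef.mp (CFC.negPart_nonneg A)
  have hfA : f A = f A⁺ - f A⁻ := by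
    rw [← map_sub, CFC.posPart_sub_negPart A hA.isSelfAdjoint]
  have hnorm : traceNorm A = (A⁺).trace.re + (A⁻).trace.re := by
    rw [traceNorm_eq_re_trace_abs, ← CFC.posPart_add_negPart A hA.isSelfAdjoint,
      Matrix.trace_add, Complex.add_re]
  rw [hnorm, ← htr A⁺, ← htr A⁻]
  exact traceNorm_le_re_trace_add_re_trace (hfA ▸ (hpos _ hP).1.sub (hpos _ hN).1)
    (hpos _ hP) (hpos _ hN) hfA

end TraceNorm

section PartialTrace

variable {d n : ℕ}

lemma ins_eq_funSplitAt_symm (i : Fin n) (α : {j : Fin n // j ≠ i} → Fin d) (s : Fin d) :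
    ins i α s = (Equiv.funSplitAt i (Fin d)).symm (s, α) := by
  funext j
  by_cases h : j = i
  · subst h
    simp [ins, Equiv.funSplitAt, Equiv.piSplitAt]
  · simp [ins, Equiv.funSplitAt, Equiv.piSplitAt, h]

lemma ins_restrict (i : Fin n) (a : Cfg d n) (s : Fin d) :
    ins i (fun j => a j) s = update a i s := by
  funext j
  by_cases h : j = i
  · subst h
    simp [ins]
  · simp [ins, h]

lemma restrict_ins (i : Fin n) (α : {j : Fin n // j ≠ i} → Fin d) (s : Fin d) :
    (fun j : {j : Fin n // j ≠ i} => ins i α s j) = α :=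
  funext fun j => dif_neg j.2

lemma trace_ptrace (i : Fin n) (X : Mat d n) : (ptrace i X).trace = X.trace := by
  rw [Matrix.trace, Matrix.trace, ← (Equiv.funSplitAt i (Fin d)).symm.sum_comp,
    Fintype.sum_prod_type, Finset.sum_comm]
  simp [ptrace, ins_eq_funSplitAt_symm]

lemma ptrace_apply_restrict (i : Fin n) (X : Mat d n) (a b : Cfg d n) :
    ptrace i X (fun j => a j) (fun j => b j) = ∑ s, X (update a i s) (update b i s) := by
  simp only [ptrace, ins_restrict]

lemma ptrace_eq_zero_iff {i : Fin n} {X : Mat d n} :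
    ptrace i X = 0 ↔ ∀ a b : Cfg d n, ∑ s, X (update a i s) (update b i s) = 0 := by
  refine ⟨fun h a b => by rw [← ptrace_apply_restrict, h, Matrix.zero_apply], fun h => ?_⟩
  ext α β
  rcases isEmpty_or_nonempty (Fin d) with hd | ⟨⟨t⟩⟩
  · simp [ptrace]
  · simpa [← ptrace_apply_restrict, restrict_ins] using h (ins i α t) (ins i β t)

lemma ptrace_add (i : Fin n) (X Y : Mat d n) : ptrace i (X + Y) = ptrace i X + ptrace i Y := by
  ext a b
  simp [ptrace, Finset.sum_add_distrib]

end PartialTrace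

section Bipartite

variable {d m n : ℕ}

lemma castAdd_ne_natAdd (i : Fin m) (j : Fin n) : Fin.castAdd n i ≠ Fin.natAdd m j :=
  Fin.ne_of_lt (by simp only [Fin.lt_def, Fin.val_castAdd, Fin.val_natAdd]; omega)

lemma append_update_left (a : Cfg d m) (k : Cfg d n) (i : Fin m) (s : Fin d) :
    Fin.append (update a i s) k = update (Fin.append a k) (Fin.castAdd n i) s := by
  ext l
  refine Fin.addCases (fun j => ?_) (fun j => ?_) l
  · by_cases h : j = i
    · subst h
      simp
    · simp [h]
  · simp [(castAdd_ne_natAdd i j).symm]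

lemma append_update_right (a : Cfg d m) (k : Cfg d n) (j : Fin n) (s : Fin d) :
    Fin.append a (update k j s) = update (Fin.append a k) (Fin.natAdd m j) s := by
  ext l
  refine Fin.addCases (fun i => ?_) (fun i => ?_) l
  · simp [castAdd_ne_natAdd i j]
  · by_cases h : i = j
    · subst h
      simp
    · simp [h]

lemma tensorMN_eq_submatrix_kronecker (A : Mat d m) (B : Mat d n) :
    tensorMN A B = (A ⊗ₖ B).submatrix (Fin.appendEquiv m n).symm (Fin.appendEquiv m n).symm :=
  rfl

lemma tensorMN_append (A : Mat d m) (B : Mat d n) (a b : Cfg d m) (k l : Cfg d n) :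
    tensorMN A B (Fin.append a k) (Fin.append b l) = A a b * B k l := by
  simp [tensorMN]

lemma tensorMN_isHermitian {A : Mat d m} {B : Mat d n} (hA : A.IsHermitian)
    (hB : B.IsHermitian) : (tensorMN A B).IsHermitian := by
  rw [tensorMN_eq_submatrix_kronecker]
  refine Matrix.IsHermitian.submatrix ?_ _
  rw [Matrix.IsHermitian, Matrix.conjTranspose_kronecker, hA.eq, hB.eq]

lemma tensorMN_posSemidef {A : Mat d m} {B : Mat d n} (hA : A.PosSemidef)
    (hB : B.PosSemidef) : (tensorMN A B).PosSemidef := by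
  rw [tensorMN_eq_submatrix_kronecker]
  exact (hA.kronecker hB).submatrix _

lemma trace_tensorMN (A : Mat d m) (B : Mat d n) :
    (tensorMN A B).trace = A.trace * B.trace := by
  rw [← Matrix.trace_kronecker]
  exact (Fin.appendEquiv m n).symm.sum_comp fun p => (A ⊗ₖ B) p p

lemma tensorMN_add_left (A A' : Mat d m) (B : Mat d n) :
    tensorMN (A + A') B = tensorMN A B + tensorMN A' B := by
  ext a b
  simp [tensorMN, add_mul]

lemma tensorMN_add_right (A : Mat d m) (B B' : Mat d n) :
    tensorMN A (B + B') = tensorMN A B + tensorMN A B' := by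
  ext a b
  simp [tensorMN, mul_add]

lemma tensorMN_sum_left {α : Type*} (s : Finset α) (A : α → Mat d m) (B : Mat d n) :
    tensorMN (∑ i ∈ s, A i) B = ∑ i ∈ s, tensorMN (A i) B :=
  map_sum (AddMonoidHom.mk' (tensorMN · B) fun A A' => tensorMN_add_left A A' B) A s

lemma tensorMN_sum_right {α : Type*} (s : Finset α) (A : Mat d m) (B : α → Mat d n) :
    tensorMN A (∑ i ∈ s, B i) = ∑ i ∈ s, tensorMN A (B i) :=
  map_sum (AddMonoidHom.mk' (tensorMN A ·) (tensorMN_add_right A)) B s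

lemma traceNorm_tensorMN_left_le {A : Mat d m} (hA : A.IsHermitian) {ρ : Mat d n}
    (hρ : IsState ρ) : traceNorm (tensorMN A ρ) ≤ traceNorm A :=
  traceNorm_map_le (AddMonoidHom.mk' (tensorMN · ρ) fun X Y => tensorMN_add_left X Y ρ)
    (fun _ hX => tensorMN_posSemidef hX hρ.1) (fun X => by simp [trace_tensorMN, hρ.2]) hA

lemma traceNorm_tensorMN_right_le {σ : Mat d m} (hσ : IsState σ) {B : Mat d n}
    (hB : B.IsHermitian) : traceNorm (tensorMN σ B) ≤ traceNorm B :=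
  traceNorm_map_le (AddMonoidHom.mk' (tensorMN σ ·) (tensorMN_add_right σ))
    (fun _ hX => tensorMN_posSemidef hσ.1 hX) (fun X => by simp [trace_tensorMN, hσ.2]) hB

lemma ptrace_castAdd_tensorMN {A : Mat d m} (B : Mat d n) {i : Fin m} (h : ptrace i A = 0) :
    ptrace (Fin.castAdd n i) (tensorMN A B) = 0 := by
  rw [ptrace_eq_zero_iff] at h ⊢
  intro c c'
  rw [← Fin.append_castAdd_natAdd (f := c), ← Fin.append_castAdd_natAdd (f := c')]
  simp only [← append_update_left, tensorMN_append, ← Finset.sum_mul, h, zero_mul]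

lemma ptrace_natAdd_tensorMN (A : Mat d m) {B : Mat d n} {j : Fin n} (h : ptrace j B = 0) :
    ptrace (Fin.natAdd m j) (tensorMN A B) = 0 := by
  rw [ptrace_eq_zero_iff] at h ⊢
  intro c c'
  rw [← Fin.append_castAdd_natAdd (f := c), ← Fin.append_castAdd_natAdd (f := c')]
  simp only [← append_update_right, tensorMN_append, ← Finset.mul_sum, h, mul_zero]

lemma ptraceLast_eq_sum_submatrix (X : Mat d (m + n)) :
    ptraceLast X = ∑ k, X.submatrix (Fin.append · k) (Fin.append · k) := by
  ext a b
  simp [ptraceLast, Matrix.sum_apply]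

lemma ptraceFirst_eq_sum_submatrix (X : Mat d (m + n)) :
    ptraceFirst X = ∑ k, X.submatrix (Fin.append k) (Fin.append k) := by
  ext a b
  simp [ptraceFirst, Matrix.sum_apply]

lemma ptraceLast_add (X Y : Mat d (m + n)) :
    ptraceLast (X + Y) = ptraceLast X + ptraceLast Y := by
  ext a b
  simp [ptraceLast, Finset.sum_add_distrib]

lemma ptraceFirst_add (X Y : Mat d (m + n)) :
    ptraceFirst (X + Y) = ptraceFirst X + ptraceFirst Y := by
  ext a b
  simp [ptraceFirst, Finset.sum_add_distrib]

lemma ptraceLast_sub (X Y : Mat d (m + n)) :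
    ptraceLast (X - Y) = ptraceLast X - ptraceLast Y :=
  map_sub (AddMonoidHom.mk' ptraceLast ptraceLast_add) X Y

lemma ptraceFirst_sub (X Y : Mat d (m + n)) :
    ptraceFirst (X - Y) = ptraceFirst X - ptraceFirst Y :=
  map_sub (AddMonoidHom.mk' ptraceFirst ptraceFirst_add) X Y

lemma ptraceLast_sum {α : Type*} (s : Finset α) (X : α → Mat d (m + n)) :
    ptraceLast (∑ i ∈ s, X i) = ∑ i ∈ s, ptraceLast (X i) :=
  map_sum (AddMonoidHom.mk' ptraceLast ptraceLast_add) X s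

lemma ptraceFirst_sum {α : Type*} (s : Finset α) (X : α → Mat d (m + n)) :
    ptraceFirst (∑ i ∈ s, X i) = ∑ i ∈ s, ptraceFirst (X i) :=
  map_sum (AddMonoidHom.mk' ptraceFirst ptraceFirst_add) X s

lemma ptraceLast_isHermitian {X : Mat d (m + n)} (hX : X.IsHermitian) :
    (ptraceLast X).IsHermitian := by
  rw [ptraceLast_eq_sum_submatrix]
  exact isSelfAdjoint_sum _ fun k _ => hX.submatrix _

lemma ptraceFirst_isHermitian {X : Mat d (m + n)} (hX : X.IsHermitian) :
    (ptraceFirst X).IsHermitian := by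
  rw [ptraceFirst_eq_sum_submatrix]
  exact isSelfAdjoint_sum _ fun k _ => hX.submatrix _

lemma ptraceLast_posSemidef {X : Mat d (m + n)} (hX : X.PosSemidef) :
    (ptraceLast X).PosSemidef := by
  rw [ptraceLast_eq_sum_submatrix]
  exact Matrix.posSemidef_sum _ fun k _ => hX.submatrix _

lemma ptraceFirst_posSemidef {X : Mat d (m + n)} (hX : X.PosSemidef) :
    (ptraceFirst X).PosSemidef := by
  rw [ptraceFirst_eq_sum_submatrix]
  exact Matrix.posSemidef_sum _ fun k _ => hX.submatrix _

lemma trace_ptraceLast (X : Mat d (m + n)) : (ptraceLast X).trace = X.trace := by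
  rw [Matrix.trace, Matrix.trace, ← (Fin.appendEquiv m n).sum_comp, Fintype.sum_prod_type]
  rfl

lemma trace_ptraceFirst (X : Mat d (m + n)) : (ptraceFirst X).trace = X.trace := by
  rw [Matrix.trace, Matrix.trace, ← (Fin.appendEquiv m n).sum_comp, Fintype.sum_prod_type,
    Finset.sum_comm]
  rfl

lemma traceNorm_ptraceLast_le {X : Mat d (m + n)} (hX : X.IsHermitian) :
    traceNorm (ptraceLast X) ≤ traceNorm X :=
  traceNorm_map_le (AddMonoidHom.mk' ptraceLast ptraceLast_add)
    (fun _ => ptraceLast_posSemidef) trace_ptraceLast hX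

lemma traceNorm_ptraceFirst_le {X : Mat d (m + n)} (hX : X.IsHermitian) :
    traceNorm (ptraceFirst X) ≤ traceNorm X :=
  traceNorm_map_le (AddMonoidHom.mk' ptraceFirst ptraceFirst_add)
    (fun _ => ptraceFirst_posSemidef) trace_ptraceFirst hX

lemma tensorMN_sub_tensorMN (A A' : Mat d m) (B B' : Mat d n) :
    tensorMN A B - tensorMN A' B' = tensorMN (A - A') B + tensorMN A' (B - B') := by
  ext a b
  simp only [tensorMN, Matrix.sub_apply, Matrix.add_apply]
  ring

lemma ptraceLast_tensorMN (A : Mat d m) (B : Mat d n) :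
    ptraceLast (tensorMN A B) = B.trace • A := by
  ext a b
  simp [ptraceLast, tensorMN_append, Matrix.trace, ← Finset.mul_sum, mul_comm]

lemma ptraceFirst_tensorMN (A : Mat d m) (B : Mat d n) :
    ptraceFirst (tensorMN A B) = A.trace • B := by
  ext a b
  simp [ptraceFirst, tensorMN_append, Matrix.trace, ← Finset.sum_mul]

lemma ptrace_ptraceLast {Y : Mat d (m + n)} {i : Fin m} (h : ptrace (Fin.castAdd n i) Y = 0) :
    ptrace i (ptraceLast Y) = 0 := by
  rw [ptrace_eq_zero_iff] at h ⊢
  intro a b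
  simp only [ptraceLast, append_update_left]
  rw [Finset.sum_comm]
  exact Finset.sum_eq_zero fun k _ => h _ _

lemma ptrace_ptraceFirst {Y : Mat d (m + n)} {j : Fin n} (h : ptrace (Fin.natAdd m j) Y = 0) :
    ptrace j (ptraceFirst Y) = 0 := by
  rw [ptrace_eq_zero_iff] at h ⊢
  intro a b
  simp only [ptraceFirst, append_update_right]
  rw [Finset.sum_comm]
  exact Finset.sum_eq_zero fun k _ => h _ _

lemma ptraceLast_eq_zero {Y : Mat d (m + n)} {j : Fin n} (h : ptrace (Fin.natAdd m j) Y = 0) :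
    ptraceLast Y = 0 := by
  ext a b
  have hblock : ptrace j (Y.submatrix (Fin.append a) (Fin.append b)) = 0 := by
    rw [ptrace_eq_zero_iff] at h ⊢
    intro k l
    simpa only [Matrix.submatrix_apply, append_update_right] using h _ _
  have htrace := trace_ptrace j (Y.submatrix (Fin.append a) (Fin.append b))
  rw [hblock, Matrix.trace_zero] at htrace
  simpa [Matrix.trace, ptraceLast] using htrace.symm

lemma ptraceFirst_eq_zero {Y : Mat d (m + n)} {i : Fin m} (h : ptrace (Fin.castAdd n i) Y = 0) :
    ptraceFirst Y = 0 := by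
  ext a b
  have hblock : ptrace i (Y.submatrix (Fin.append · a) (Fin.append · b)) = 0 := by
    rw [ptrace_eq_zero_iff] at h ⊢
    intro k l
    simpa only [Matrix.submatrix_apply, append_update_left] using h _ _
  have htrace := trace_ptrace i (Y.submatrix (Fin.append · a) (Fin.append · b))
  rw [hblock, Matrix.trace_zero] at htrace
  simpa [Matrix.trace, ptraceFirst] using htrace.symm

end Bipartite

section Decomposition

variable {d n : ℕ}

def FirstDiffAt (i : Fin n) (a b : Cfg d n) : Prop := a i ≠ b i ∧ ∀ j < i, a j = b j

lemma firstDiffAt_comm {i : Fin n} {a b : Cfg d n} : FirstDiffAt i a b ↔ FirstDiffAt i b a := by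
  simp only [FirstDiffAt, ne_comm, eq_comm]

lemma existsUnique_firstDiffAt {a b : Cfg d n} (h : a ≠ b) : ∃! i, FirstDiffAt i a b := by
  obtain ⟨i, hi, hmin⟩ := (Finset.univ.filter fun j => a j ≠ b j).exists_min_image id
    (by simpa [Finset.filter_nonempty_iff, funext_iff] using h)
  refine ⟨i, ⟨(Finset.mem_filter.mp hi).2, fun j hj => ?_⟩, fun k ⟨hk, hkmin⟩ => ?_⟩
  · by_contra hne
    exact absurd (hmin j (by simpa using hne)) (not_le.mpr hj)
  · rcases lt_trichotomy k i with hlt | rfl | hgt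
    · exact absurd (hmin k (by simpa using hk)) (not_le.mpr hlt)
    · rfl
    · exact absurd (hkmin i hgt) (Finset.mem_filter.mp hi).2

def offDiagPart (i : Fin n) (X : Mat d n) : Mat d n :=
  fun a b => if FirstDiffAt i a b then X a b else 0

lemma offDiagPart_isHermitian {X : Mat d n} (hX : X.IsHermitian) (i : Fin n) :
    (offDiagPart i X).IsHermitian := by
  ext a b
  simp only [Matrix.conjTranspose_apply, offDiagPart, firstDiffAt_comm (a := b), apply_ite star,
    star_zero, hX.apply]

lemma ptrace_offDiagPart (i : Fin n) (X : Mat d n) : ptrace i (offDiagPart i X) = 0 :=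
  ptrace_eq_zero_iff.mpr fun a b => Finset.sum_eq_zero fun s _ => by
    simp [offDiagPart, FirstDiffAt]

lemma sum_offDiagPart (X : Mat d n) : ∑ i, offDiagPart i X = X - Matrix.diagonal X.diag := by
  ext a b
  rw [Matrix.sum_apply, Matrix.sub_apply]
  by_cases hab : a = b
  · subst hab
    simp [offDiagPart, FirstDiffAt]
  · obtain ⟨i, hi, huniq⟩ := existsUnique_firstDiffAt hab
    rw [Finset.sum_eq_single i (fun j _ hj => ?_) (by simp)]
    · simp [offDiagPart, hi, hab]
    · simp [offDiagPart, mt (huniq j) hj]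

def pathCfg (c₀ a : Cfg d n) (k : ℕ) : Cfg d n := fun j => if (j : ℕ) < k then c₀ j else a j

lemma pathCfg_zero (c₀ a : Cfg d n) : pathCfg c₀ a 0 = a := by
  funext j
  simp [pathCfg]

lemma pathCfg_of_le (c₀ a : Cfg d n) {k : ℕ} (hk : n ≤ k) : pathCfg c₀ a k = c₀ := by
  funext j
  simp [pathCfg, j.isLt.trans_le hk]

lemma pathCfg_succ_apply_of_ne (c₀ a : Cfg d n) {i j : Fin n} (h : j ≠ i) :
    pathCfg c₀ a (i + 1) j = pathCfg c₀ a i j := by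
  have : (j : ℕ) ≠ i := Fin.val_ne_of_ne h
  simp only [pathCfg]
  congr 1
  exact propext (by omega)

def diagPart (c₀ : Cfg d n) (i : Fin n) (X : Mat d n) : Mat d n :=
  ∑ a, (Matrix.single (pathCfg c₀ a i) (pathCfg c₀ a i) (X a a) -
    Matrix.single (pathCfg c₀ a (i + 1)) (pathCfg c₀ a (i + 1)) (X a a))

lemma single_isHermitian {c : Cfg d n} {x : ℂ} (hx : star x = x) :
    (Matrix.single c c x).IsHermitian := by
  ext a b
  rw [Matrix.conjTranspose_apply, Matrix.single_apply, Matrix.single_apply]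
  by_cases hab : c = a ∧ c = b
  · rw [if_pos ⟨hab.2, hab.1⟩, if_pos hab, hx]
  · rw [if_neg fun h => hab ⟨h.2, h.1⟩, if_neg hab, star_zero]

lemma diagPart_isHermitian {X : Mat d n} (hX : X.IsHermitian) (c₀ : Cfg d n) (i : Fin n) :
    (diagPart c₀ i X).IsHermitian :=
  isSelfAdjoint_sum _ fun a _ =>
    (single_isHermitian (hX.apply a a)).sub (single_isHermitian (hX.apply a a))

lemma sum_single_update (i : Fin n) (c : Cfg d n) (x : ℂ) (u v : Cfg d n) :
    ∑ s, Matrix.single c c x (update u i s) (update v i s) =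
      if ∀ j ≠ i, u j = c j ∧ v j = c j then x else 0 := by
  have hcond : ∀ s, (update u i s = c ∧ update v i s = c) ↔
      (s = c i ∧ ∀ j ≠ i, u j = c j ∧ v j = c j) := fun s => by
    simp only [update_eq_iff]
    grind
  simp only [Matrix.single_apply, eq_comm (a := c), hcond, ite_and, Finset.sum_ite_eq',
    Finset.mem_univ, if_true]

lemma ptrace_diagPart (c₀ : Cfg d n) (i : Fin n) (X : Mat d n) :
    ptrace i (diagPart c₀ i X) = 0 := by
  refine ptrace_eq_zero_iff.mpr fun u v => ?_
  simp only [diagPart, Matrix.sum_apply, Matrix.sub_apply]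
  rw [Finset.sum_comm]
  refine Finset.sum_eq_zero fun a _ => ?_
  rw [Finset.sum_sub_distrib, sum_single_update, sum_single_update, sub_eq_zero]
  refine if_congr (forall₂_congr fun j hj => ?_) rfl rfl
  rw [pathCfg_succ_apply_of_ne c₀ a hj]

lemma sum_diagPart {X : Mat d n} (htr : X.trace = 0) (c₀ : Cfg d n) :
    ∑ i, diagPart c₀ i X = Matrix.diagonal X.diag := by
  have htele : ∀ a, ∑ i : Fin n, (Matrix.single (pathCfg c₀ a i) (pathCfg c₀ a i) (X a a) -
      Matrix.single (pathCfg c₀ a (i + 1)) (pathCfg c₀ a (i + 1)) (X a a)) =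
      Matrix.single a a (X a a) - Matrix.single c₀ c₀ (X a a) := fun a => by
    rw [Fin.sum_univ_eq_sum_range (fun k =>
      Matrix.single (pathCfg c₀ a k) (pathCfg c₀ a k) (X a a) -
        Matrix.single (pathCfg c₀ a (k + 1)) (pathCfg c₀ a (k + 1)) (X a a)),
      Finset.sum_range_sub', pathCfg_zero, pathCfg_of_le c₀ a le_rfl]
  have hsum := map_sum (Matrix.singleAddMonoidHom c₀ c₀) (fun a => X a a) Finset.univ
  simp only [Matrix.singleAddMonoidHom_apply] at hsum
  simp only [diagPart]
  rw [Finset.sum_comm, Finset.sum_congr rfl fun a _ => htele a, Finset.sum_sub_distrib,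
    Matrix.sum_single_eq_diagonal, ← hsum, show ∑ a, X a a = 0 from htr, Matrix.single_zero,
    sub_zero]
  rfl

end Decomposition

section W1

variable {d m n : ℕ}

lemma W1Set_nonempty {X : Mat d n} (hX : X.IsHermitian) (htr : X.trace = 0) :
    (W1Set X).Nonempty := by
  rcases isEmpty_or_nonempty (Cfg d n) with hempty | ⟨⟨c₀⟩⟩
  · exact ⟨_, 0, fun _ => Matrix.isHermitian_zero, fun i => by ext; simp [ptrace],
      funext fun a => isEmptyElim a, rfl⟩
  · refine ⟨_, fun i => offDiagPart i X + diagPart c₀ i X,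
      fun i => (offDiagPart_isHermitian hX i).add (diagPart_isHermitian hX c₀ i),
      fun i => by rw [ptrace_add, ptrace_offDiagPart, ptrace_diagPart, add_zero], ?_, rfl⟩
    rw [Finset.sum_add_distrib, sum_offDiagPart, sum_diagPart htr, sub_add_cancel]

lemma W1Set_sub_nonempty {ρ σ : Mat d n} (hρ : IsState ρ) (hσ : IsState σ) :
    (W1Set (ρ - σ)).Nonempty :=
  W1Set_nonempty (hρ.1.1.sub hσ.1.1) (by rw [Matrix.trace_sub, hρ.2, hσ.2, sub_self])

lemma W1Set_bddBelow (X : Mat d n) : BddBelow (W1Set X) :=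
  ⟨0, fun _ ⟨Y, _, _, _, hr⟩ => hr ▸ mul_nonneg (by norm_num)
    (Finset.sum_nonneg fun i _ => traceNorm_nonneg (Y i))⟩

lemma exists_mem_W1Set_tensorMN_add_tensorMN_le {σ : Mat d m} {ρ : Mat d n} (hσ : IsState σ)
    (hρ : IsState ρ) {X : Mat d m} {Y : Mat d n} {x y : ℝ} (hx : x ∈ W1Set X)
    (hy : y ∈ W1Set Y) : ∃ c ∈ W1Set (tensorMN X ρ + tensorMN σ Y), c ≤ x + y := by
  obtain ⟨X', hX'h, hX'p, rfl, rfl⟩ := hx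
  obtain ⟨Y', hY'h, hY'p, rfl, rfl⟩ := hy
  let Z : Fin (m + n) → Mat d (m + n) :=
    Fin.addCases (fun i => tensorMN (X' i) ρ) (fun j => tensorMN σ (Y' j))
  have hZh : ∀ l, (Z l).IsHermitian := Fin.addCases
    (fun i => by simpa [Z] using tensorMN_isHermitian (hX'h i) hρ.1.1)
    (fun j => by simpa [Z] using tensorMN_isHermitian hσ.1.1 (hY'h j))
  have hZp : ∀ l, ptrace l (Z l) = 0 := Fin.addCases
    (fun i => by simpa [Z] using ptrace_castAdd_tensorMN ρ (hX'p i))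
    (fun j => by simpa [Z] using ptrace_natAdd_tensorMN σ (hY'p j))
  refine ⟨_, ⟨Z, hZh, hZp, ?_, rfl⟩, ?_⟩
  · simp [Z, Fin.sum_univ_add, tensorMN_sum_left, tensorMN_sum_right]
  · rw [Fin.sum_univ_add, mul_add]
    gcongr with i _ j _
    · simpa [Z] using traceNorm_tensorMN_left_le (hX'h i) hρ
    · simpa [Z] using traceNorm_tensorMN_right_le hσ (hY'h j)

lemma exists_mem_W1Set_ptraceLast_ptraceFirst_le {Z : Mat d (m + n)} {c : ℝ}
    (hc : c ∈ W1Set Z) :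
    ∃ x ∈ W1Set (ptraceLast Z), ∃ y ∈ W1Set (ptraceFirst Z), x + y ≤ c := by
  obtain ⟨Y, hYh, hYp, rfl, rfl⟩ := hc
  refine ⟨_, ⟨fun i => ptraceLast (Y (Fin.castAdd n i)),
      fun i => ptraceLast_isHermitian (hYh _), fun i => ptrace_ptraceLast (hYp _), ?_, rfl⟩,
    _, ⟨fun j => ptraceFirst (Y (Fin.natAdd m j)),
      fun j => ptraceFirst_isHermitian (hYh _), fun j => ptrace_ptraceFirst (hYp _), ?_, rfl⟩, ?_⟩
  · rw [ptraceLast_sum, Fin.sum_univ_add,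
      Finset.sum_eq_zero fun j _ => ptraceLast_eq_zero (hYp (Fin.natAdd m j)), add_zero]
  · rw [ptraceFirst_sum, Fin.sum_univ_add,
      Finset.sum_eq_zero fun i _ => ptraceFirst_eq_zero (hYp (Fin.castAdd n i)), zero_add]
  · rw [Fin.sum_univ_add, ← mul_add]
    gcongr with i _ j _
    · exact traceNorm_ptraceLast_le (hYh _)
    · exact traceNorm_ptraceFirst_le (hYh _)

end W1

theorem stmt2_general {d m n : ℕ}
    (ρ' σ' : Mat d m) (ρ'' σ'' : Mat d n)
    (hρ' : IsState ρ') (hσ' : IsState σ') (hρ'' : IsState ρ'') (hσ'' : IsState σ'') :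
    W1 (tensorMN ρ' ρ'' - tensorMN σ' σ'') = W1 (ρ' - σ') + W1 (ρ'' - σ'') := by
  have hlast : ptraceLast (tensorMN ρ' ρ'' - tensorMN σ' σ'') = ρ' - σ' := by
    rw [ptraceLast_sub, ptraceLast_tensorMN, ptraceLast_tensorMN, hρ''.2, hσ''.2, one_smul,
      one_smul]
  have hfirst : ptraceFirst (tensorMN ρ' ρ'' - tensorMN σ' σ'') = ρ'' - σ'' := by
    rw [ptraceFirst_sub, ptraceFirst_tensorMN, ptraceFirst_tensorMN, hρ'.2, hσ'.2, one_smul,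
      one_smul]
  rw [W1, W1, W1, ← csInf_add (W1Set_sub_nonempty hρ' hσ') (W1Set_bddBelow _)
    (W1Set_sub_nonempty hρ'' hσ'') (W1Set_bddBelow _)]
  refine csInf_eq_csInf_of_forall_exists_le (fun c hc => ?_) ?_
  · obtain ⟨x, hx, y, hy, hxy⟩ := exists_mem_W1Set_ptraceLast_ptraceFirst_le hc
    rw [hlast] at hx
    rw [hfirst] at hy
    exact ⟨x + y, Set.add_mem_add hx hy, hxy⟩
  · rintro _ ⟨x, hx, y, hy, rfl⟩
    rw [tensorMN_sub_tensorMN]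
    exact exists_mem_W1Set_tensorMN_add_tensorMN_le hσ' hρ'' hx hy

theorem stmt2 {d m n : ℕ} (hd : 2 ≤ d) (hm : 1 ≤ m) (hn : 1 ≤ n)
    (ρ' σ' : Mat d m) (ρ'' σ'' : Mat d n)
    (hρ' : IsState ρ') (hσ' : IsState σ') (hρ'' : IsState ρ'') (hσ'' : IsState σ'') :
    W1 (tensorMN ρ' ρ'' - tensorMN σ' σ'') = W1 (ρ' - σ') + W1 (ρ'' - σ'') :=
  stmt2_general ρ' σ' ρ'' σ'' hρ' hσ' hρ'' hσ''

end QW1
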